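/- The vector of dimensions d = (1, 3+2√2, 2+√2, 2+√2, 2+2√2, 1+√2, 1+√2) is an eigenvector of the matrix N_{Y₁} = [[0,0,0,1,0,0,0],[0,1,1,1,1,1,0],[1,1,0,0,1,0,0],[0,1,1,0,0,0,1],[0,1,0,1,1,0,1],[0,0,1,0,1,0,0],[0,1,0,0,0,1,0]] with eigenvalue 2+√2. Moreover 2+√2 equals the largest (Perron–Frobenius) eigenvalue of N_{Y₁}: every complex eigenvalue of N_{Y₁} has absolute value at most 2+√2. -/

import Mathlib

/-!
The dimension vector `d` is a positive eigenvector of the nonnegative matrix `N_{Y₁}`, which is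
checked entrywise. Its eigenvalue `r` then bounds every complex eigenvalue `μ`: if `N v = μ v`
with `v ≠ 0`, take `i` maximising `|v i| / d i` and `c` that maximum, so `|v| ≤ c d`
entrywise; then `|μ| |v i| ≤ (N |v|) i ≤ c (N d) i = r c d i = r |v i|`.
-/

open Matrix Polynomial

/-- The fusion matrix N_{Y₁}, over ℝ. -/
def NY1 : Matrix (Fin 7) (Fin 7) ℝ :=
  !![0,0,0,1,0,0,0;
     0,1,1,1,1,1,0;
     1,1,0,0,1,0,0;
     0,1,1,0,0,0,1;
     0,1,0,1,1,0,1;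
     0,0,1,0,1,0,0;
     0,1,0,0,0,1,0]

/-- The fusion matrix N_{Y₁}, over ℂ. -/
def NY1C : Matrix (Fin 7) (Fin 7) ℂ :=
  !![0,0,0,1,0,0,0;
     0,1,1,1,1,1,0;
     1,1,0,0,1,0,0;
     0,1,1,0,0,0,1;
     0,1,0,1,1,0,1;
     0,0,1,0,1,0,0;
     0,1,0,0,0,1,0]

/-- The dimension vector d = (1, 3+2√2, 2+√2, 2+√2, 2+2√2, 1+√2, 1+√2). -/
noncomputable def dvec : Fin 7 → ℝ :=
  ![1, 3 + 2 * Real.sqrt 2, 2 + Real.sqrt 2, 2 + Real.sqrt 2,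
    2 + 2 * Real.sqrt 2, 1 + Real.sqrt 2, 1 + Real.sqrt 2]

theorem exists_eq_mul_and_forall_norm_le_mul {ι E : Type*} [Fintype ι] [Nonempty ι] [Norm E]
    (v : ι → E) {d : ι → ℝ} (hd : ∀ i, 0 < d i) :
    ∃ i c, ‖v i‖ = c * d i ∧ ∀ j, ‖v j‖ ≤ c * d j := by
  obtain ⟨i, -, hi⟩ := Finset.exists_max_image Finset.univ (fun i => ‖v i‖ / d i)
    Finset.univ_nonempty
  refine ⟨i, ‖v i‖ / d i, (div_mul_cancel₀ _ (hd i).ne').symm, fun j => ?_⟩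
  rw [← div_le_iff₀ (hd j)]
  exact hi j (Finset.mem_univ j)

namespace Matrix

variable {n : Type*} [Fintype n]

theorem exists_mulVec_eq_smul_of_isRoot_charpoly [DecidableEq n] {K : Type*} [Field K]
    {A : Matrix n n K} {μ : K} (h : A.charpoly.IsRoot μ) : ∃ v ≠ 0, A *ᵥ v = μ • v := by
  rw [IsRoot, eval_charpoly] at h
  obtain ⟨v, hv, hv0⟩ := exists_mulVec_eq_zero_iff.mpr h
  refine ⟨v, hv, ?_⟩
  rw [sub_mulVec, sub_eq_zero, scalar_apply] at hv0
  funext i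
  rw [← hv0, mulVec_diagonal]
  rfl

theorem norm_mulVec_map_ofReal_le {A : Matrix n n ℝ} (hA : ∀ i j, 0 ≤ A i j) (v : n → ℂ)
    (i : n) : ‖(A.map (↑) *ᵥ v) i‖ ≤ (A *ᵥ fun j => ‖v j‖) i := by
  refine (norm_sum_le _ _).trans (Finset.sum_le_sum fun j _ => ?_)
  dsimp only
  rw [map_apply, norm_mul, Complex.norm_real, Real.norm_of_nonneg (hA i j)]

theorem norm_le_of_mulVec_eq_smul_of_pos {A : Matrix n n ℝ} (hA : ∀ i j, 0 ≤ A i j)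
    {d : n → ℝ} (hd : ∀ i, 0 < d i) {r : ℝ} (hAd : A *ᵥ d = r • d)
    {μ : ℂ} {v : n → ℂ} (hv : v ≠ 0) (hAv : A.map (↑) *ᵥ v = μ • v) : ‖μ‖ ≤ r := by
  obtain ⟨k, hk⟩ := Function.ne_iff.mp hv
  have : Nonempty n := ⟨k⟩
  obtain ⟨i, c, hi, hc⟩ := exists_eq_mul_and_forall_norm_le_mul v hd
  have hvi : 0 < ‖v i‖ := by
    have hc0 : 0 < c := pos_of_mul_pos_left ((norm_pos_iff.mpr hk).trans_le (hc k)) (hd k).le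
    exact hi ▸ mul_pos hc0 (hd i)
  refine le_of_mul_le_mul_right ?_ hvi
  calc ‖μ‖ * ‖v i‖ = ‖(A.map (↑) *ᵥ v) i‖ := by rw [hAv, Pi.smul_apply, smul_eq_mul, norm_mul]
    _ ≤ (A *ᵥ fun j => ‖v j‖) i := norm_mulVec_map_ofReal_le hA v i
    _ ≤ (A *ᵥ (c • d)) i :=
        Finset.sum_le_sum fun j _ => mul_le_mul_of_nonneg_left (hc j) (hA i j)
    _ = r * ‖v i‖ := by rw [mulVec_smul, hAd, hi]; simp only [Pi.smul_apply, smul_eq_mul]; ring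

end Matrix

theorem NY1_mulVec_dvec : NY1 *ᵥ dvec = (2 + Real.sqrt 2) • dvec := by
  have h2 : Real.sqrt 2 * Real.sqrt 2 = 2 := Real.mul_self_sqrt zero_le_two
  funext i
  fin_cases i <;> simp [NY1, dvec, mulVec, dotProduct, Fin.sum_univ_seven] <;> linarith [h2]

theorem dvec_pos (i : Fin 7) : 0 < dvec i := by
  fin_cases i <;> simp [dvec] <;> positivity

theorem NY1_nonneg (i j : Fin 7) : 0 ≤ NY1 i j := by
  fin_cases i <;> fin_cases j <;> norm_num [NY1]

theorem NY1C_eq_map_ofReal : NY1C = NY1.map (↑) := by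
  ext i j
  fin_cases i <;> fin_cases j <;> norm_num [NY1, NY1C]

theorem dvec_is_perron_eigenvector :
    NY1.mulVec dvec = (2 + Real.sqrt 2) • dvec ∧
    ∀ μ ∈ (Matrix.charpoly NY1C).roots, ‖μ‖ ≤ 2 + Real.sqrt 2 := by
  refine ⟨NY1_mulVec_dvec, fun μ hμ => ?_⟩
  obtain ⟨v, hv, hNv⟩ := exists_mulVec_eq_smul_of_isRoot_charpoly (isRoot_of_mem_roots hμ)
  rw [NY1C_eq_map_ofReal] at hNv
  exact norm_le_of_mulVec_eq_smul_of_pos NY1_nonneg dvec_pos NY1_mulVec_dvec hv hNv
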